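/- arXiv:2304.08093 — 2 statements merged into one kernel-verified Lean document; each statement's English description precedes it below -/
import Mathlib

section
/- Let n ≥ 2 and let K = (G, M, I) be a finite formal context. If σ : G → [n] and τ : G → [n] are both bijective full scale-measures from K into the interordinal scale I_n, then either τ = σ, or τ(g) = n + 1 − σ(g) for all g ∈ G. Hence K admits at most two bijective full scale-measures into I_n. -/
/-- The intent (common attributes) of a set of objects. -/
def intentOf {G M : Type*} (Inc : G → M → Prop) (A : Set G) : Set M :=
  {m | ∀ g ∈ A, Inc g m}

/-- The extent (common objects) of a set of attributes. -/
def extentOf {G M : Type*} (Inc : G → M → Prop) (B : Set M) : Set G :=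
  {g | ∀ m ∈ B, Inc g m}

/-- The set of extents of the formal context `(G, M, Inc)`. -/
def Extents {G M : Type*} (Inc : G → M → Prop) : Set (Set G) :=
  {A | extentOf Inc (intentOf Inc A) = A}

/-- The object closure operator `φ` of a formal context: `φ(A) = A''`. -/
def closureK {G M : Type*} (Inc : G → M → Prop) (A : Set G) : Set G :=
  extentOf Inc (intentOf Inc A)

/-- `σ` is a scale-measure from `(G,M,Inc)` into `(GS,MS,IncS)`. -/
def IsScaleMeasure {G M GS MS : Type*} (Inc : G → M → Prop) (IncS : GS → MS → Prop)
    (σ : G → GS) : Prop :=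
  ∀ A ∈ Extents IncS, σ ⁻¹' A ∈ Extents Inc

/-- `σ` is a full scale-measure from `(G,M,Inc)` into `(GS,MS,IncS)`. -/
def IsFullScaleMeasure {G M GS MS : Type*} (Inc : G → M → Prop) (IncS : GS → MS → Prop)
    (σ : G → GS) : Prop :=
  IsScaleMeasure Inc IncS σ ∧ Extents Inc = (fun A => σ ⁻¹' A) '' Extents IncS

/-- The incidence of the induced subcontext `K[H, M]`. -/
def subInc {G M : Type*} (Inc : G → M → Prop) (H : Set G) : ↥H → M → Prop :=
  fun h m => Inc h.1 m

/-- `σ : H → GS` is a local full scale-measure from `K` into `S`, i.e. a full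
scale-measure from `K[H,M]` into `S`. -/
def IsLocalFullScaleMeasure {G M GS MS : Type*} (Inc : G → M → Prop) (H : Set G)
    (IncS : GS → MS → Prop) (σ : ↥H → GS) : Prop :=
  IsFullScaleMeasure (subInc Inc H) IncS σ

/-- Nominal scale `N_n = ([n],[n],=)` (objects/attributes modelled by `Fin n`). -/
def nominalInc (n : ℕ) : Fin n → Fin n → Prop := fun a b => a = b

/-- Contranominal scale `B_n = ([n],[n],≠)`. -/
def contranominalInc (n : ℕ) : Fin n → Fin n → Prop := fun a b => a ≠ b

/-- Ordinal scale `O_n = ([n],[n],≤)`. -/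
def ordinalInc (n : ℕ) : Fin n → Fin n → Prop := fun a b => a ≤ b

/-- Interordinal scale `I_n = ([n],[n],≤) | ([n],[n],≥)`. -/
def interordinalInc (n : ℕ) : Fin n → Fin n ⊕ Fin n → Prop :=
  fun g m => Sum.elim (fun a => g ≤ a) (fun a => a ≤ g) m

/-- Crown scale `C_n = ([n],[n],J)` with `(a,b) ∈ J` iff `a = b`, `b = a+1`, or
`(a,b) = (n,1)` (here `Fin n` is `0`-indexed, so `(n,1)` becomes `(n-1,0)`). -/
def crownInc (n : ℕ) : Fin n → Fin n → Prop :=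
  fun a b => a = b ∨ (b : ℕ) = (a : ℕ) + 1 ∨ ((a : ℕ) = n - 1 ∧ (b : ℕ) = 0)

/-!
The transition map `f = τ ∘ σ⁻¹ : [n] → [n]` pulls every extent of `I_n` back to an extent of
`I_n`: `τ` pulls it back to an extent of `K`, which, `σ` being full, is `σ⁻¹` of an extent of `I_n`.
Intervals are extents of `I_n` and extents of `I_n` are order-convex, so `f` maps every point
between `a` and `b` between `f a` and `f b`; hence `f` is monotone or antitone, and an injective
such self-map of `[n]` is the identity or the reversal.
-/

open Set Function

section FormalContext

variable {G M GS MS : Type*} {Inc : G → M → Prop} {IncS : GS → MS → Prop}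

theorem extentOf_mem_extents (B : Set M) : extentOf Inc B ∈ Extents Inc :=
  lowerPolar_upperPolar_lowerPolar Inc B

theorem IsScaleMeasure.image_preimage_mem_extents {σ τ : G → GS}
    (hτ : IsScaleMeasure Inc IncS τ) (hσ : IsFullScaleMeasure Inc IncS σ) (hσs : Surjective σ)
    {B : Set GS} (hB : B ∈ Extents IncS) : σ '' (τ ⁻¹' B) ∈ Extents IncS := by
  obtain ⟨A, hA, hAB⟩ : τ ⁻¹' B ∈ (σ ⁻¹' ·) '' Extents IncS := hσ.2 ▸ hτ B hB
  rwa [← hAB, image_preimage_eq A hσs]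

end FormalContext

section Interordinal

variable {n : ℕ}

theorem Icc_mem_extents_interordinal (a b : Fin n) : Icc a b ∈ Extents (interordinalInc n) := by
  have : Icc a b = extentOf (interordinalInc n) {.inl b, .inr a} := by
    ext g
    simp [extentOf, interordinalInc, and_comm]
  exact this ▸ extentOf_mem_extents _

theorem ordConnected_of_mem_extents_interordinal {A : Set (Fin n)}
    (hA : A ∈ Extents (interordinalInc n)) : A.OrdConnected := by
  refine ⟨fun x hx z hz y ⟨hxy, hyz⟩ => ?_⟩
  rw [← hA]
  rintro (a | a) hm
  exacts [hyz.trans (hm z hz), (hm x hx).trans hxy]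

end Interordinal

theorem monotone_or_antitone_of_ordConnected_preimage_uIcc {α β : Type*} [LinearOrder α]
    [LinearOrder β] {f : α → β} (hf : ∀ a b, (f ⁻¹' uIcc a b).OrdConnected) :
    Monotone f ∨ Antitone f :=
  monotone_or_antitone_iff_uIcc.2 fun a b _ hc =>
    (hf (f a) (f b)).uIcc_subset left_mem_uIcc right_mem_uIcc hc

theorem Fin.eq_id_or_eq_rev {n : ℕ} {f : Fin n → Fin n} (hf : Injective f)
    (h : Monotone f ∨ Antitone f) : f = id ∨ f = Fin.rev := by
  refine h.imp (fun hm => (hm.strictMono_of_injective hf).eq_id) fun ha => ?_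
  have hrev : Fin.rev ∘ f = id :=
    (Fin.rev_strictAnti.comp (ha.strictAnti_of_injective hf)).eq_id
  funext x
  simpa using congrArg Fin.rev (congrFun hrev x)

theorem eq_or_eq_rev_comp_of_isFullScaleMeasure_interordinal {G M : Type*}
    {Inc : G → M → Prop} {n : ℕ} {σ τ : G → Fin n} (hσb : Bijective σ) (hτi : Injective τ)
    (hσ : IsFullScaleMeasure Inc (interordinalInc n) σ)
    (hτ : IsScaleMeasure Inc (interordinalInc n) τ) :
    τ = σ ∨ τ = Fin.rev ∘ σ := by
  let e := Equiv.ofBijective σ hσb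
  have hpre : ∀ a b : Fin n, (τ ∘ e.symm) ⁻¹' uIcc a b = σ '' (τ ⁻¹' uIcc a b) := fun a b => by
    rw [preimage_comp, ← e.image_eq_preimage_symm]
    rfl
  have hf : Monotone (τ ∘ e.symm) ∨ Antitone (τ ∘ e.symm) :=
    monotone_or_antitone_of_ordConnected_preimage_uIcc fun a b => hpre a b ▸
      ordConnected_of_mem_extents_interordinal (hτ.image_preimage_mem_extents hσ hσb.2
        (Icc_mem_extents_interordinal _ _))
  have hτσ : τ = (τ ∘ e.symm) ∘ σ := by
    funext g
    simp [e]
  rcases Fin.eq_id_or_eq_rev (hτi.comp e.symm.injective) hf with h | h <;> rw [hτσ, h]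
  · exact .inl rfl
  · exact .inr rfl

theorem stmt8_general {G M : Type*} (Inc : G → M → Prop)
    {n : ℕ} (σ τ : G → Fin n)
    (hσb : Function.Bijective σ) (hτb : Function.Bijective τ)
    (hσ : IsFullScaleMeasure Inc (interordinalInc n) σ)
    (hτ : IsFullScaleMeasure Inc (interordinalInc n) τ) :
    (τ = σ ∨ ∀ g : G, τ g = (σ g).rev) ∧
      {ρ : G → Fin n | Function.Bijective ρ ∧
        IsFullScaleMeasure Inc (interordinalInc n) ρ}.ncard ≤ 2 := by
  refine ⟨(eq_or_eq_rev_comp_of_isFullScaleMeasure_interordinal hσb hτb.1 hσ hτ.1).imp_right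
    fun h g => congrFun h g, ?_⟩
  have hsub : {ρ : G → Fin n | Function.Bijective ρ ∧
      IsFullScaleMeasure Inc (interordinalInc n) ρ} ⊆ {σ, Fin.rev ∘ σ} := fun ρ ⟨hρb, hρ⟩ =>
    eq_or_eq_rev_comp_of_isFullScaleMeasure_interordinal hσb hρb.1 hσ hρ.1
  calc _ ≤ ({σ, Fin.rev ∘ σ} : Set (G → Fin n)).ncard := ncard_le_ncard hsub (toFinite _)
    _ ≤ ({Fin.rev ∘ σ} : Set (G → Fin n)).ncard + 1 := ncard_insert_le _ _
    _ = 2 := by rw [ncard_singleton]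

/-- Rigidity of bijective full scale-measures into the interordinal scale. -/
theorem stmt8 {G M : Type*} [Finite G] [Finite M] (Inc : G → M → Prop)
    {n : ℕ} (hn : 2 ≤ n) (σ τ : G → Fin n)
    (hσb : Function.Bijective σ) (hτb : Function.Bijective τ)
    (hσ : IsFullScaleMeasure Inc (interordinalInc n) σ)
    (hτ : IsFullScaleMeasure Inc (interordinalInc n) τ) :
    (τ = σ ∨ ∀ g : G, τ g = (σ g).rev) ∧
      {ρ : G → Fin n | Function.Bijective ρ ∧
        IsFullScaleMeasure Inc (interordinalInc n) ρ}.ncard ≤ 2 :=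
  stmt8_general Inc σ τ hσb hτb hσ hτ
end

section
/- For every n ≥ 3, the set of extents of the crown scale C_n = ([n],[n],J), where (a,b) ∈ J iff a = b, or b = a+1, or (a,b) = (n,1), is Ext(C_n) = {∅, [n]} ∪ {{i} | i ∈ [n]} ∪ {{i, i+1} | 1 ≤ i < n} ∪ {{n, 1}}. -/
/-!
The crown `C_n` is the context in which object `g` has the attributes `g` and `s g`, for the
cyclic shift `s`. Every extent is the extent of its intent, so the extents are exactly the sets
`B'`. Since `{m}' = {s⁻¹ m, m}`, an extent with a nonempty intent lies inside such a pair, hence is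
`∅`, a singleton or a pair. Conversely, `{a, s a}' = {a}` and `M' = ∅` as soon as `s` has no
points of period 1 or 2, which for the cyclic shift means `n ≥ 3`.
-/

section FormalContext

variable {G M : Type*} (Inc : G → M → Prop)

lemma subset_extentOf_intentOf (A : Set G) : A ⊆ extentOf Inc (intentOf Inc A) :=
  fun _ hg _ hm => hm _ hg

lemma subset_intentOf_extentOf (B : Set M) : B ⊆ intentOf Inc (extentOf Inc B) :=
  fun _ hm _ hg => hg _ hm

lemma extentOf_anti {B C : Set M} (h : B ⊆ C) : extentOf Inc C ⊆ extentOf Inc B :=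
  fun _ hg m hm => hg m (h hm)

@[simp]
lemma extentOf_empty : extentOf Inc ∅ = Set.univ :=
  Set.eq_univ_of_forall fun _ _ hm => hm.elim

lemma extents_eq_range_extentOf : Extents Inc = Set.range (extentOf Inc) := by
  ext A
  refine ⟨fun hA => ⟨intentOf Inc A, hA⟩, ?_⟩
  rintro ⟨B, rfl⟩
  exact (extentOf_anti Inc (subset_intentOf_extentOf Inc B)).antisymm
    (subset_extentOf_intentOf Inc _)

end FormalContext

section PermCrown

variable {α : Type*} (s : Equiv.Perm α)

def permCrownInc (g m : α) : Prop := g = m ∨ s g = m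

lemma extentOf_permCrownInc_singleton (m : α) :
    extentOf (permCrownInc s) {m} = {s.symm m, m} := by
  ext g
  simp only [extentOf, permCrownInc, Set.mem_singleton_iff, forall_eq, Set.mem_ofPred_eq,
    Set.mem_insert_iff, Equiv.eq_symm_apply]
  tauto

variable {s}

lemma apply_ne_self_of_apply_apply_ne (hs : ∀ a, s (s a) ≠ a) (a : α) : s a ≠ a :=
  fun h => hs a (by rw [h, h])

lemma extentOf_permCrownInc_pair (hs : ∀ a, s (s a) ≠ a) (a : α) :
    extentOf (permCrownInc s) {a, s a} = {a} := by
  ext g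
  simp only [extentOf, permCrownInc, Set.mem_insert_iff, Set.mem_singleton_iff,
    forall_eq_or_imp, forall_eq, Set.mem_ofPred_eq, EmbeddingLike.apply_eq_iff_eq]
  constructor
  · rintro ⟨rfl | rfl, h⟩
    · rfl
    · rcases h with h | h
      · exact absurd h.symm (hs g)
      · exact absurd h.symm (apply_ne_self_of_apply_apply_ne hs g)
  · rintro rfl
    exact ⟨Or.inl rfl, Or.inr rfl⟩

lemma extentOf_permCrownInc_univ (hs : ∀ a, s (s a) ≠ a) :
    extentOf (permCrownInc s) Set.univ = ∅ := by
  refine Set.eq_empty_of_forall_notMem fun g hg => ?_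
  rcases hg (s (s g)) trivial with h | h
  · exact hs g h.symm
  · exact apply_ne_self_of_apply_apply_ne hs g (s.injective h).symm

theorem extents_permCrownInc (hs : ∀ a, s (s a) ≠ a) :
    Extents (permCrownInc s) =
      {∅, Set.univ} ∪ {A | ∃ a, A = {a}} ∪ {A | ∃ a, A = {a, s a}} := by
  rw [extents_eq_range_extentOf]
  ext A
  simp only [Set.mem_range, Set.mem_union, Set.mem_insert_iff, Set.mem_singleton_iff,
    Set.mem_ofPred_eq]
  constructor
  · rintro ⟨B, rfl⟩
    rcases B.eq_empty_or_nonempty with rfl | ⟨m, hm⟩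
    · simp
    have hpair : extentOf (permCrownInc s) B ⊆ {s.symm m, m} :=
      extentOf_permCrownInc_singleton s m ▸
        extentOf_anti _ (Set.singleton_subset_iff.2 hm)
    rcases Set.subset_pair_iff_eq.1 hpair with h | h | h | h
    · exact Or.inl (Or.inl (Or.inl h))
    · exact Or.inl (Or.inr ⟨_, h⟩)
    · exact Or.inl (Or.inr ⟨_, h⟩)
    · exact Or.inr ⟨s.symm m, by rw [h, Equiv.apply_symm_apply]⟩
  · rintro (((rfl | rfl) | ⟨a, rfl⟩) | ⟨a, rfl⟩)
    · exact ⟨_, extentOf_permCrownInc_univ hs⟩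
    · exact ⟨_, extentOf_empty _⟩
    · exact ⟨_, extentOf_permCrownInc_pair hs a⟩
    · exact ⟨{s a}, by rw [extentOf_permCrownInc_singleton, Equiv.symm_apply_apply]⟩

end PermCrown

section FinRotate

lemma finRotate_eq_iff {n : ℕ} [NeZero n] (i j : Fin n) :
    finRotate n i = j ↔ (j : ℕ) = i + 1 ∨ ((i : ℕ) = n - 1 ∧ (j : ℕ) = 0) := by
  obtain ⟨k, rfl⟩ := Nat.exists_eq_succ_of_ne_zero (NeZero.ne n)
  rw [Fin.ext_iff, coe_finRotate]
  simp only [Fin.ext_iff, Fin.val_last]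
  have := j.isLt
  split_ifs <;> omega

lemma finRotate_finRotate_ne {n : ℕ} (hn : 3 ≤ n) (i : Fin n) :
    finRotate n (finRotate n i) ≠ i := by
  have : NeZero n := ⟨by omega⟩
  intro h
  have h₁ := (finRotate_eq_iff i _).1 rfl
  have h₂ := (finRotate_eq_iff _ i).1 h
  omega

lemma crownInc_eq_permCrownInc_finRotate (n : ℕ) [NeZero n] :
    crownInc n = permCrownInc (finRotate n) := by
  funext a b
  simp only [crownInc, permCrownInc, finRotate_eq_iff]

lemma setOf_eq_pair_finRotate (n : ℕ) [NeZero n] :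
    {A : Set (Fin n) | ∃ a, A = {a, finRotate n a}} =
      {A | ∃ i j : Fin n, (j : ℕ) = (i : ℕ) + 1 ∧ A = {i, j}} ∪
        {{⟨n - 1, Nat.sub_one_lt (NeZero.ne n)⟩, ⟨0, Nat.pos_of_neZero n⟩}} := by
  ext A
  simp only [Set.mem_ofPred_eq, Set.mem_union, Set.mem_singleton_iff]
  constructor
  · rintro ⟨a, rfl⟩
    rcases (finRotate_eq_iff a _).1 rfl with h | ⟨ha, h0⟩
    · exact Or.inl ⟨a, _, h, rfl⟩
    · obtain rfl : a = ⟨n - 1, Nat.sub_one_lt (NeZero.ne n)⟩ := Fin.ext ha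
      rw [show finRotate n _ = ⟨0, Nat.pos_of_neZero n⟩ from Fin.ext h0]
      exact Or.inr rfl
  · rintro (⟨i, j, hij, rfl⟩ | rfl)
    · exact ⟨i, by rw [(finRotate_eq_iff i j).2 (Or.inl hij)]⟩
    · refine ⟨⟨n - 1, Nat.sub_one_lt (NeZero.ne n)⟩, ?_⟩
      rw [(finRotate_eq_iff _ ⟨0, Nat.pos_of_neZero n⟩).2 (Or.inr ⟨rfl, rfl⟩)]

end FinRotate

/-- Extents of the crown scale. -/
theorem stmt14 {n : ℕ} (hn : 3 ≤ n) :
    Extents (crownInc n) =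
      {∅, Set.univ} ∪ {A | ∃ i : Fin n, A = {i}} ∪
        {A | ∃ i j : Fin n, (j : ℕ) = (i : ℕ) + 1 ∧ A = {i, j}} ∪
        {({⟨n - 1, by omega⟩, ⟨0, by omega⟩} : Set (Fin n))} := by
  have : NeZero n := ⟨by omega⟩
  rw [crownInc_eq_permCrownInc_finRotate, extents_permCrownInc (finRotate_finRotate_ne hn),
    setOf_eq_pair_finRotate, ← Set.union_assoc]
end
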